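/- Let R > 0 and let K ⊂ ℝ^d be a nonempty compact convex set contained in the centered Euclidean ball R·B^d. Let X_K be distributed according to the Hadwiger–Wills density of K. Then for every s > 0, P( dist(X_K, K) ≤ s ) ≤ R^d·κ_d + d·κ_d·∫_0^s e^{−πr²} (r + R)^{d−1} dr, where κ_d = π^{d/2}/Γ(d/2 + 1) is the volume of the unit ball in ℝ^d. -/

import Mathlib

open MeasureTheory Metric Real

/-- Volume of the unit Euclidean ball in dimension `n`. -/
noncomputable def ballVol (n : ℕ) : ℝ := π ^ ((n : ℝ) / 2) / Real.Gamma ((n : ℝ) / 2 + 1)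

lemma my_integrable {E : Type*} [NormedAddCommGroup E] [InnerProductSpace ℝ E]
    [FiniteDimensional ℝ E] [MeasurableSpace E] [BorelSpace E] {b : ℝ} (hb : 0 < b) :
    Integrable (fun v : E => rexp (-b * ‖v‖ ^ 2)) := by
  have h := (GaussianFourier.integrable_cexp_neg_mul_sq_norm_add (V := E)
    (b := (b : ℂ)) (by simpa using hb) 0 0).norm
  refine h.congr (Filter.Eventually.of_forall fun v => ?_)
  simp [Complex.norm_exp]
  exact Or.inl (by norm_cast)

lemma sqrtpi_pow (n : ℕ) : Real.sqrt π ^ n = π ^ ((n : ℝ) / 2) := by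
  rw [Real.sqrt_eq_rpow, ← Real.rpow_natCast (π ^ ((1:ℝ)/2)) n,
    ← Real.rpow_mul pi_pos.le]
  ring_nf

lemma ballVol_nonneg (n : ℕ) : 0 ≤ ballVol n := by
  have hG : 0 < Real.Gamma ((n : ℝ) / 2 + 1) := Real.Gamma_pos_of_pos (by positivity)
  unfold ballVol
  positivity

theorem dist_law_small_ball_bound (d : ℕ) (R : ℝ) (hR : 0 < R)
    (K : Set (EuclideanSpace ℝ (Fin d)))
    (hKcomp : IsCompact K) (hKconv : Convex ℝ K) (hKne : K.Nonempty)
    (hKR : K ⊆ Metric.closedBall 0 R)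
    (Ω : Type*) [MeasurableSpace Ω] (P : Measure Ω) [IsProbabilityMeasure P]
    (X : Ω → EuclideanSpace ℝ (Fin d)) (hX : Measurable X)
    (hlaw : Measure.map X P = volume.withDensity (fun x =>
      ENNReal.ofReal (Real.exp (-π * Metric.infDist x K ^ 2) /
        ∫ y : EuclideanSpace ℝ (Fin d), Real.exp (-π * Metric.infDist y K ^ 2))))
    (s : ℝ) (hs : 0 < s) :
    (P {ω | Metric.infDist (X ω) K ≤ s}).toReal ≤
      R ^ d * ballVol d +
        d * ballVol d * ∫ r in (0:ℝ)..s, Real.exp (-π * r ^ 2) * (r + R) ^ (d - 1) := by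
  classical
  -- trivial case d = 0
  rcases Nat.eq_zero_or_pos d with hd0 | hd
  · subst hd0
    have h1 : (P {ω | Metric.infDist (X ω) K ≤ s}).toReal ≤ 1 := by
      have := ENNReal.toReal_mono (by simp) (prob_le_one (μ := P)
        (s := {ω | Metric.infDist (X ω) K ≤ s}))
      simpa using this
    have h2 : ballVol 0 = 1 := by
      unfold ballVol
      norm_num [Real.Gamma_one]
    simp [h2]
    linarith
  haveI : Nonempty (Fin d) := ⟨⟨0, hd⟩⟩
  haveI : Nontrivial (EuclideanSpace ℝ (Fin d)) := by
    have : 0 < Module.finrank ℝ (EuclideanSpace ℝ (Fin d)) := by simp [hd]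
    exact Module.nontrivial_of_finrank_pos this
  -- basic facts
  have hGpos : 0 < Real.Gamma ((d : ℝ) / 2 + 1) := Real.Gamma_pos_of_pos (by positivity)
  set f : (EuclideanSpace ℝ (Fin d)) → ℝ := fun x => rexp (-π * infDist x K ^ 2) with hfdef
  have hdcont : Continuous fun x : (EuclideanSpace ℝ (Fin d)) => infDist x K := Metric.continuous_infDist_pt K
  have hfcont : Continuous f := by
    exact Real.continuous_exp.comp ((continuous_const.mul (hdcont.pow 2)))
  have hnorm : ∀ x : (EuclideanSpace ℝ (Fin d)), ‖x‖ ≤ infDist x K + R := by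
    intro x
    obtain ⟨y, hyK, hxy⟩ := hKcomp.exists_infDist_eq_dist hKne x
    have hyR : ‖y‖ ≤ R := by simpa [Metric.mem_closedBall, dist_zero_right] using hKR hyK
    have h2 : ‖x‖ - ‖y‖ ≤ dist x y := by
      rw [dist_eq_norm]; exact norm_sub_norm_le x y
    rw [hxy]
    linarith
  have hd0 : ∀ x : (EuclideanSpace ℝ (Fin d)), 0 ≤ infDist x K := fun x => Metric.infDist_nonneg
  -- f is integrable
  have hfle : ∀ x : (EuclideanSpace ℝ (Fin d)), f x ≤ rexp (π * R ^ 2) * rexp (-(π / 2) * ‖x‖ ^ 2) := by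
    intro x
    rw [← Real.exp_add]
    apply Real.exp_le_exp.mpr
    have h1 := hnorm x
    have h2 := hd0 x
    have h3 : ‖x‖ ^ 2 / 2 - R ^ 2 ≤ infDist x K ^ 2 := by
      rcases le_or_gt ‖x‖ R with h | h
      · nlinarith [norm_nonneg x]
      · nlinarith [sq_nonneg (‖x‖ - 2 * R),
          mul_nonneg (by linarith : (0:ℝ) ≤ infDist x K - (‖x‖ - R))
            (by linarith : (0:ℝ) ≤ infDist x K + (‖x‖ - R))]
    nlinarith [pi_pos]
  have hfint : Integrable f := by
    have hg : Integrable (fun x : (EuclideanSpace ℝ (Fin d)) => rexp (π * R ^ 2) * rexp (-(π / 2) * ‖x‖ ^ 2)) :=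
      (my_integrable (E := EuclideanSpace ℝ (Fin d)) (by positivity)).const_mul _
    refine hg.mono' hfcont.aestronglyMeasurable (Filter.Eventually.of_forall fun x => ?_)
    rw [Real.norm_eq_abs, abs_of_nonneg (Real.exp_nonneg _)]
    exact hfle x
  -- the Wills functional is at least 1
  set W : ℝ := ∫ y : (EuclideanSpace ℝ (Fin d)), f y with hWdef
  have hW1 : 1 ≤ W := by
    obtain ⟨p, hp⟩ := hKne
    have hgi : Integrable (fun x : (EuclideanSpace ℝ (Fin d)) => rexp (-π * ‖x - p‖ ^ 2)) :=
      (my_integrable (E := EuclideanSpace ℝ (Fin d)) pi_pos).comp_sub_right p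
    have hval : ∫ x : (EuclideanSpace ℝ (Fin d)), rexp (-π * ‖x - p‖ ^ 2) = 1 := by
      have h := integral_sub_right_eq_self (μ := (volume : Measure (EuclideanSpace ℝ (Fin d))))
        (fun z : (EuclideanSpace ℝ (Fin d)) => rexp (-π * ‖z‖ ^ 2)) p
      rw [h, GaussianFourier.integral_rexp_neg_mul_sq_norm pi_pos]
      rw [div_self pi_ne_zero, Real.one_rpow]
    rw [← hval]
    refine integral_mono hgi hfint fun x => ?_
    apply Real.exp_le_exp.mpr
    have h1 : infDist x K ≤ ‖x - p‖ := by
      simpa [dist_eq_norm] using Metric.infDist_le_dist_of_mem hp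
    have h2 : infDist x K ^ 2 ≤ ‖x - p‖ ^ 2 := pow_le_pow_left₀ (hd0 x) h1 2
    nlinarith [pi_pos]
  have hWpos : 0 < W := lt_of_lt_of_le one_pos hW1
  -- rewrite the probability
  set A : Set (EuclideanSpace ℝ (Fin d)) := {x | infDist x K ≤ s} with hAdef
  have hAmeas : MeasurableSet A := measurableSet_le hdcont.measurable measurable_const
  have hPA : P {ω | Metric.infDist (X ω) K ≤ s}
      = ∫⁻ x in A, ENNReal.ofReal (f x / W) ∂volume := by
    have : {ω | Metric.infDist (X ω) K ≤ s} = X ⁻¹' A := rfl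
    rw [this, ← Measure.map_apply hX hAmeas, hlaw, withDensity_apply _ hAmeas]
  set g : (EuclideanSpace ℝ (Fin d)) → ENNReal := fun x => ENNReal.ofReal (f x) with hgdef
  have hstep1 : ∫⁻ x in A, ENNReal.ofReal (f x / W) ∂volume ≤ ∫⁻ x in A, g x ∂volume := by
    refine lintegral_mono fun x => ENNReal.ofReal_le_ofReal ?_
    exact div_le_self (Real.exp_nonneg _) hW1
  set B : Set (EuclideanSpace ℝ (Fin d)) := Metric.closedBall 0 R with hBdef
  set S : Set (EuclideanSpace ℝ (Fin d)) := Metric.closedBall 0 (R + s) \ Metric.ball 0 R with hSdef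
  have hsub : A ⊆ B ∪ S := by
    intro x hx
    rcases le_or_gt ‖x‖ R with h | h
    · exact Or.inl (by simpa [hBdef, Metric.mem_closedBall, dist_zero_right] using h)
    · refine Or.inr ⟨?_, ?_⟩
      · have := hnorm x
        have hxA : infDist x K ≤ s := hx
        simp only [Metric.mem_closedBall, dist_zero_right]
        linarith
      · simp only [Metric.mem_ball, dist_zero_right, not_lt]
        linarith
  have hsplit : ∫⁻ x in A, g x ∂volume ≤ (∫⁻ x in B, g x ∂volume) + ∫⁻ x in S, g x ∂volume := by
    calc ∫⁻ x in A, g x ∂volume ≤ ∫⁻ x in B ∪ S, g x ∂volume := lintegral_mono_set hsub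
      _ ≤ _ := lintegral_union_le _ _ _
  -- ball part
  have hvol : volume B = ENNReal.ofReal (R ^ d * ballVol d) := by
    rw [hBdef, EuclideanSpace.volume_closedBall]
    rw [← ENNReal.ofReal_pow hR.le, ← ENNReal.ofReal_mul (by positivity)]
    congr 1
    simp only [Fintype.card_fin]
    rw [sqrtpi_pow]
    rfl
  have hB : ∫⁻ x in B, g x ∂volume ≤ ENNReal.ofReal (R ^ d * ballVol d) := by
    calc ∫⁻ x in B, g x ∂volume ≤ ∫⁻ _x in B, 1 ∂volume := by
          refine lintegral_mono fun x => ?_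
          have hfx1 : f x ≤ 1 :=
            Real.exp_le_one_iff.mpr (by nlinarith [pi_pos, sq_nonneg (infDist x K)])
          calc g x = ENNReal.ofReal (f x) := rfl
            _ ≤ ENNReal.ofReal 1 := ENNReal.ofReal_le_ofReal hfx1
            _ = 1 := ENNReal.ofReal_one
      _ = volume B := by simp
      _ = _ := hvol
  -- shell part
  set G : ℝ → ℝ := Set.indicator (Set.Icc R (R + s)) (fun y => rexp (-π * (y - R) ^ 2)) with hGdef
  have hSsub : ∀ x ∈ S, ‖x‖ ∈ Set.Icc R (R + s) := by
    intro x hx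
    obtain ⟨h1, h2⟩ := hx
    constructor
    · simpa [Metric.mem_ball, dist_zero_right, not_lt] using h2
    · simpa [Metric.mem_closedBall, dist_zero_right] using h1
  have hS1 : ∫⁻ x in S, g x ∂volume ≤ ∫⁻ x in S, ENNReal.ofReal (G ‖x‖) ∂volume := by
    refine setLIntegral_mono' (measurableSet_closedBall.diff measurableSet_ball) fun x hx => ?_
    rw [hGdef]
    rw [Set.indicator_of_mem (hSsub x hx)]
    refine ENNReal.ofReal_le_ofReal (Real.exp_le_exp.mpr ?_)
    have h1 := hnorm x
    have h2 := (hSsub x hx).1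
    have h3 := hd0 x
    have h4 : (‖x‖ - R) ^ 2 ≤ infDist x K ^ 2 :=
      pow_le_pow_left₀ (by linarith) (by linarith) 2
    nlinarith [pi_pos]
  have hGmeas : Measurable G := by
    refine Measurable.indicator ?_ measurableSet_Icc
    exact (Real.continuous_exp.comp (continuous_const.mul ((continuous_id.sub continuous_const).pow 2))).measurable
  have hS2 : ∫⁻ x in S, ENNReal.ofReal (G ‖x‖) ∂volume ≤ ∫⁻ x : (EuclideanSpace ℝ (Fin d)), ENNReal.ofReal (G ‖x‖) ∂volume :=
    setLIntegral_le_lintegral _ _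
  have hGnn : ∀ y, 0 ≤ G y := by
    intro y
    rw [hGdef]
    exact Set.indicator_nonneg (fun z _ => Real.exp_nonneg _) y
  have hGcompint : Integrable (fun x : (EuclideanSpace ℝ (Fin d)) => G ‖x‖) := by
    have heq : (fun x : (EuclideanSpace ℝ (Fin d)) => G ‖x‖)
        = Set.indicator S (fun x : (EuclideanSpace ℝ (Fin d)) => rexp (-π * (‖x‖ - R) ^ 2)) := by
      funext x
      rw [hGdef]
      by_cases hx : ‖x‖ ∈ Set.Icc R (R + s)
      · rw [Set.indicator_of_mem hx, Set.indicator_of_mem]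
        refine ⟨?_, ?_⟩
        · simpa [Metric.mem_closedBall, dist_zero_right] using hx.2
        · simpa [Metric.mem_ball, dist_zero_right, not_lt] using hx.1
      · rw [Set.indicator_of_notMem hx, Set.indicator_of_notMem]
        intro hxS
        exact hx (hSsub x hxS)
    rw [heq]
    have hScomp : IsCompact S := isCompact_closedBall _ _ |>.diff isOpen_ball
    have hcont : Continuous fun x : (EuclideanSpace ℝ (Fin d)) => rexp (-π * (‖x‖ - R) ^ 2) :=
      Real.continuous_exp.comp (continuous_const.mul ((continuous_norm.sub continuous_const).pow 2))
    exact (hcont.continuousOn.integrableOn_compact hScomp).integrable_indicator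
      (measurableSet_closedBall.diff measurableSet_ball)
  have hS3 : ∫⁻ x : (EuclideanSpace ℝ (Fin d)), ENNReal.ofReal (G ‖x‖) ∂volume
      = ENNReal.ofReal (∫ x : (EuclideanSpace ℝ (Fin d)), G ‖x‖ ∂volume) :=
    (MeasureTheory.ofReal_integral_eq_lintegral_ofReal hGcompint
      (Filter.Eventually.of_forall fun x => hGnn _)).symm
  -- polar coordinates
  have hpolar : ∫ x : (EuclideanSpace ℝ (Fin d)), G ‖x‖ ∂volume
      = d * ballVol d * ∫ r in (0:ℝ)..s, rexp (-π * r ^ 2) * (r + R) ^ (d - 1) := by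
    rw [MeasureTheory.integral_fun_norm_addHaar (volume : Measure (EuclideanSpace ℝ (Fin d))) G]
    have hdim : Module.finrank ℝ (EuclideanSpace ℝ (Fin d)) = d := finrank_euclideanSpace_fin
    rw [hdim]
    have hb1 : (volume (Metric.ball (0:(EuclideanSpace ℝ (Fin d))) 1)).toReal = ballVol d := by
      rw [EuclideanSpace.volume_ball]
      simp only [Fintype.card_fin]
      rw [ENNReal.toReal_mul, ← ENNReal.ofReal_pow (by norm_num), one_pow]
      rw [ENNReal.toReal_ofReal (by norm_num), ENNReal.toReal_ofReal (by positivity)]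
      rw [sqrtpi_pow]
      simp [ballVol]
    rw [measureReal_def, hb1]
    have hint : ∫ y in Set.Ioi (0:ℝ), y ^ (d - 1) • G y
        = ∫ r in (0:ℝ)..s, rexp (-π * r ^ 2) * (r + R) ^ (d - 1) := by
      have h1 : (fun y : ℝ => y ^ (d - 1) • G y)
          = Set.indicator (Set.Icc R (R + s)) (fun y => y ^ (d - 1) * rexp (-π * (y - R) ^ 2)) := by
        funext y
        rw [hGdef, smul_eq_mul]
        by_cases hy : y ∈ Set.Icc R (R + s)
        · rw [Set.indicator_of_mem hy, Set.indicator_of_mem hy]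
        · rw [Set.indicator_of_notMem hy, Set.indicator_of_notMem hy, mul_zero]
      rw [h1, MeasureTheory.setIntegral_indicator measurableSet_Icc]
      have h2 : Set.Ioi (0:ℝ) ∩ Set.Icc R (R + s) = Set.Icc R (R + s) := by
        refine Set.inter_eq_self_of_subset_right fun y hy => ?_
        have := hy.1
        exact lt_of_lt_of_le hR this
      rw [h2, MeasureTheory.integral_Icc_eq_integral_Ioc,
        ← intervalIntegral.integral_of_le (by linarith)]
      have h3 := intervalIntegral.integral_comp_add_right (a := (0:ℝ)) (b := s)
        (fun y => y ^ (d - 1) * rexp (-π * (y - R) ^ 2)) R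
      rw [zero_add, add_comm s R] at h3
      rw [← h3]
      refine intervalIntegral.integral_congr fun r _ => ?_
      simp only [add_sub_cancel_right]
      ring
    rw [hint]
    rw [nsmul_eq_mul, smul_eq_mul]
    ring
  -- combine
  have hfinal : P {ω | Metric.infDist (X ω) K ≤ s}
      ≤ ENNReal.ofReal (R ^ d * ballVol d
        + d * ballVol d * ∫ r in (0:ℝ)..s, rexp (-π * r ^ 2) * (r + R) ^ (d - 1)) := by
    rw [hPA]
    have ht2nn : 0 ≤ (d : ℝ) * ballVol d * ∫ r in (0:ℝ)..s, rexp (-π * r ^ 2) * (r + R) ^ (d - 1) := by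
      have hint_nn : 0 ≤ ∫ r in (0:ℝ)..s, rexp (-π * r ^ 2) * (r + R) ^ (d - 1) := by
        refine intervalIntegral.integral_nonneg hs.le fun r hr => ?_
        have : 0 ≤ r := hr.1
        positivity
      have := ballVol_nonneg d
      positivity
    have hbv := ballVol_nonneg d
    rw [ENNReal.ofReal_add (by positivity) ht2nn]
    calc ∫⁻ x in A, ENNReal.ofReal (f x / W) ∂volume
        ≤ ∫⁻ x in A, g x ∂volume := hstep1
      _ ≤ (∫⁻ x in B, g x ∂volume) + ∫⁻ x in S, g x ∂volume := hsplit
      _ ≤ _ := by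
          refine add_le_add hB ?_
          calc ∫⁻ x in S, g x ∂volume ≤ ∫⁻ x in S, ENNReal.ofReal (G ‖x‖) ∂volume := hS1
            _ ≤ ∫⁻ x : (EuclideanSpace ℝ (Fin d)), ENNReal.ofReal (G ‖x‖) ∂volume := hS2
            _ = ENNReal.ofReal (∫ x : (EuclideanSpace ℝ (Fin d)), G ‖x‖ ∂volume) := hS3
            _ = _ := by rw [hpolar]
  refine ENNReal.toReal_le_of_le_ofReal ?_ hfinal
  have hint_nn : 0 ≤ ∫ r in (0:ℝ)..s, rexp (-π * r ^ 2) * (r + R) ^ (d - 1) := by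
    refine intervalIntegral.integral_nonneg hs.le fun r hr => ?_
    have : 0 ≤ r := hr.1
    positivity
  have := ballVol_nonneg d
  positivity
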